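/- Fix a directed graph C and a phase space function 𝒫: C₀ → Euc. Let Γ → C be a finite colored graph and let Aut(I(a₁)) ⊔ … ⊔ Aut(I(a_k)) be a skeleton of the symmetry groupoid G(Γ), i.e. a choice of nodes a₁,…,a_k of Γ, one from each isomorphism class of input trees, where Aut(I(a)) denotes the group of isomorphisms of the colored tree I(a) over C. Then 𝕍(Γ) is isomorphic to the product ∏_{i=1}^k Ctrl(I(a_i))^{Aut(I(a_i))} of the subspaces of Aut(I(a_i))-invariant elements, where Aut(I(a_i)) acts on Ctrl(I(a_i)) by σ·X = X ∘ ℙ(σ|_{lv I(a_i)}). -/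

import Mathlib

/-- A directed graph: a set of edges, a set of nodes, and source/target maps. -/
structure DGraph : Type 1 where
  V : Type
  E : Type
  s : E → V
  t : E → V

/-- A map of directed graphs. -/
@[ext]
structure GraphMap (G G' : DGraph) where
  vMap : G.V → G'.V
  eMap : G.E → G'.E
  hs : ∀ e, G'.s (eMap e) = vMap (G.s e)
  ht : ∀ e, G'.t (eMap e) = vMap (G.t e)

namespace GraphMap

def id (G : DGraph) : GraphMap G G :=
  ⟨fun v => v, fun e => e, fun _ => rfl, fun _ => rfl⟩

def comp {G₁ G₂ G₃ : DGraph} (g : GraphMap G₂ G₃) (f : GraphMap G₁ G₂) :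
    GraphMap G₁ G₃ where
  vMap v := g.vMap (f.vMap v)
  eMap e := g.eMap (f.eMap e)
  hs e := by rw [g.hs, f.hs]
  ht e := by rw [g.ht, f.ht]

end GraphMap

/-- A graph colored by the graph `C`, i.e. a graph together with a map of graphs to `C`. -/
structure CGraph (C : DGraph) : Type 1 where
  gr : DGraph
  col : GraphMap gr C

/-- A map of graphs over `C`. -/
@[ext]
structure CMap {C : DGraph} (Γ Γ' : CGraph C) where
  toMap : GraphMap Γ.gr Γ'.gr
  hv : ∀ v, Γ'.col.vMap (toMap.vMap v) = Γ.col.vMap v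
  he : ∀ e, Γ'.col.eMap (toMap.eMap e) = Γ.col.eMap e

namespace CMap

variable {C : DGraph}

def id (Γ : CGraph C) : CMap Γ Γ := ⟨GraphMap.id _, fun _ => rfl, fun _ => rfl⟩

def comp {Γ₁ Γ₂ Γ₃ : CGraph C} (g : CMap Γ₂ Γ₃) (f : CMap Γ₁ Γ₂) : CMap Γ₁ Γ₃ where
  toMap := g.toMap.comp f.toMap
  hv v := by
    show Γ₃.col.vMap (g.toMap.vMap (f.toMap.vMap v)) = Γ₁.col.vMap v
    rw [g.hv, f.hv]
  he e := by
    show Γ₃.col.eMap (g.toMap.eMap (f.toMap.eMap e)) = Γ₁.col.eMap e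
    rw [g.he, f.he]

/-- A map of graphs over `C` is an isomorphism iff it is bijective on nodes and edges. -/
def IsIso {Γ Γ' : CGraph C} (φ : CMap Γ Γ') : Prop :=
  Function.Bijective φ.toMap.vMap ∧ Function.Bijective φ.toMap.eMap

theorem isIso_id (Γ : CGraph C) : (CMap.id Γ).IsIso :=
  ⟨Function.bijective_id, Function.bijective_id⟩

theorem IsIso.comp {Γ₁ Γ₂ Γ₃ : CGraph C} {g : CMap Γ₂ Γ₃} {f : CMap Γ₁ Γ₂}
    (hg : g.IsIso) (hf : f.IsIso) : (g.comp f).IsIso :=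
  ⟨hg.1.comp hf.1, hg.2.comp hf.2⟩

end CMap

variable {C : DGraph}

/-- The set of edges of `Γ` with target `a`; these are both the edges and the
leaves of the input tree `I(a)`. -/
abbrev inEdge (Γ : CGraph C) (a : Γ.gr.V) : Type := {e : Γ.gr.E // Γ.gr.t e = a}

/-- The input tree `I(a)` of a node `a` of a graph `Γ` over `C`, as a graph over `C`. -/
def inTree (Γ : CGraph C) (a : Γ.gr.V) : CGraph C where
  gr :=
    { V := Unit ⊕ inEdge Γ a
      E := inEdge Γ a
      s := Sum.inr
      t := fun _ => Sum.inl () }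
  col :=
    { vMap := Sum.elim (fun _ => Γ.col.vMap a) (fun e => Γ.col.vMap (Γ.gr.s e.1))
      eMap := fun e => Γ.col.eMap e.1
      hs := fun e => Γ.col.hs e.1
      ht := fun e => by
        show C.t (Γ.col.eMap e.1) = Γ.col.vMap a
        rw [Γ.col.ht e.1, e.2] }

/-- The edge map `I(a) → I(φ(a))` induced by a map `φ` of graphs over `C`. -/
def liftEdge {Γ Γ' : CGraph C} (φ : CMap Γ Γ') (a : Γ.gr.V) (e : inEdge Γ a) :
    inEdge Γ' (φ.toMap.vMap a) :=
  ⟨φ.toMap.eMap e.1, by rw [φ.toMap.ht, e.2]⟩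

/-- The map of input trees `φ_a : I(a) → I(φ(a))` induced by a map `φ` of graphs over `C`. -/
def inMap {Γ Γ' : CGraph C} (φ : CMap Γ Γ') (a : Γ.gr.V) :
    CMap (inTree Γ a) (inTree Γ' (φ.toMap.vMap a)) where
  toMap :=
    { vMap := Sum.elim (fun _ => Sum.inl ()) (fun e => Sum.inr (liftEdge φ a e))
      eMap := liftEdge φ a
      hs := fun _ => rfl
      ht := fun _ => rfl }
  hv v := by
    cases v with
    | inl u => exact φ.hv a
    | inr e =>
      show Γ'.col.vMap (Γ'.gr.s (φ.toMap.eMap e.1)) = Γ.col.vMap (Γ.gr.s e.1)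
      rw [φ.toMap.hs, φ.hv]
  he e := φ.he e.1

/-- A map of graphs over `C` is *étale* if the induced maps of input trees are all
isomorphisms of graphs over `C`. -/
def IsEtale {Γ Γ' : CGraph C} (φ : CMap Γ Γ') : Prop :=
  ∀ a : Γ.gr.V, (inMap φ a).IsIso

section TreeLemmas

variable {Γ Γ' : CGraph C} {a : Γ.gr.V} {b : Γ'.gr.V}

theorem CMap.vMap_inr (σ : CMap (inTree Γ a) (inTree Γ' b)) (e : inEdge Γ a) :
    σ.toMap.vMap (Sum.inr e) = Sum.inr (σ.toMap.eMap e) :=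
  (σ.toMap.hs e).symm

/-- Maps of input trees preserve the colors of the sources of the leaves. -/
theorem leafColor (σ : CMap (inTree Γ a) (inTree Γ' b)) (e : inEdge Γ a) :
    Γ'.col.vMap (Γ'.gr.s (σ.toMap.eMap e).1) = Γ.col.vMap (Γ.gr.s e.1) := by
  have h := σ.hv (Sum.inr e)
  rw [CMap.vMap_inr] at h
  exact h

/-- An isomorphism of input trees maps the root to the root. -/
theorem rootFixed (σ : CMap (inTree Γ a) (inTree Γ' b)) (hσ : σ.IsIso) :
    σ.toMap.vMap (Sum.inl ()) = Sum.inl () := by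
  rcases h : σ.toMap.vMap (Sum.inl ()) with u | e'
  · cases u; rfl
  · obtain ⟨e, rfl⟩ := hσ.2.2 e'
    have ht : (Sum.inl () : Unit ⊕ inEdge Γ' b) = σ.toMap.vMap (Sum.inl ()) := σ.toMap.ht e
    rw [h] at ht
    exact absurd ht Sum.inl_ne_inr

/-- An isomorphism of input trees preserves the color of the root. -/
theorem rootColor (σ : CMap (inTree Γ a) (inTree Γ' b)) (hσ : σ.IsIso) :
    Γ'.col.vMap b = Γ.col.vMap a := by
  have h := σ.hv (Sum.inl ())
  rw [rootFixed σ hσ] at h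
  exact h

end TreeLemmas

/-! ### Phase spaces and control systems (Euclidean case) -/

set_option linter.unusedSectionVars false

variable (P : C.V → Type)
variable [∀ c, NormedAddCommGroup (P c)] [∀ c, NormedSpace ℝ (P c)]
  [∀ c, FiniteDimensional ℝ (P c)]

/-- Transport along an equality of colors. -/
def pcast {c c' : C.V} (h : c = c') : P c ≃ₗ[ℝ] P c' := by
  subst h; exact LinearEquiv.refl ℝ (P c)

/-- The (linear) map `ℙ f : ℙ X → ℙ Y` induced by a map `f : Y → X` of sets over the
set of colors. -/
def phasePull {X Y : Type} (α : X → C.V) (β : Y → C.V) (f : Y → X)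
    (hc : ∀ y, α (f y) = β y) :
    (∀ x, P (α x)) →ₗ[ℝ] (∀ y, P (β y)) where
  toFun v y := pcast P (hc y) (v (f y))
  map_add' u v := by funext y; simp
  map_smul' r v := by funext y; simp

theorem pcast_contDiff {c c' : C.V} (h : c = c') :
    ContDiff ℝ (⊤ : ℕ∞) (pcast P h) := by
  subst h; exact contDiff_id

theorem phasePull_contDiff {X Y : Type} [Fintype X] [Fintype Y]
    (α : X → C.V) (β : Y → C.V) (f : Y → X) (hc : ∀ y, α (f y) = β y) :
    ContDiff ℝ (⊤ : ℕ∞) (phasePull P α β f hc) :=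
  contDiff_pi.2 fun y =>
    (pcast_contDiff P (hc y)).comp
      ((ContinuousLinearMap.proj (R := ℝ) (φ := fun x => P (α x)) (f y)).contDiff)

/-- The vector space of smooth maps between two Euclidean spaces, as a submodule of the
space of all maps. -/
def SmoothMaps (V W : Type) [NormedAddCommGroup V] [NormedSpace ℝ V]
    [NormedAddCommGroup W] [NormedSpace ℝ W] : Submodule ℝ (V → W) where
  carrier := {f | ContDiff ℝ (⊤ : ℕ∞) f}
  add_mem' := fun {f g} hf hg => by
    simp only [Set.mem_setOf_eq] at *
    exact hf.add hg
  zero_mem' := by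
    simp only [Set.mem_setOf_eq]
    exact contDiff_const
  smul_mem' := fun c f hf => by
    simp only [Set.mem_setOf_eq] at *
    exact hf.const_smul c

theorem mem_smoothMaps_iff {V W : Type} [NormedAddCommGroup V] [NormedSpace ℝ V]
    [NormedAddCommGroup W] [NormedSpace ℝ W] (f : V → W) :
    f ∈ SmoothMaps V W ↔ ContDiff ℝ (⊤ : ℕ∞) f := Iff.rfl

noncomputable instance instFintypeInEdge (Γ : CGraph C) [Fintype Γ.gr.E] (a : Γ.gr.V) :
    Fintype (inEdge Γ a) := Fintype.ofFinite _

/-- The phase space `ℙ(lv I(a))` of the leaves of the input tree of `a`. -/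
abbrev LeafSpace (Γ : CGraph C) (a : Γ.gr.V) : Type :=
  ∀ e : inEdge Γ a, P (Γ.col.vMap (Γ.gr.s e.1))

/-- The space of control systems associated to the input tree of a node `a`:
all smooth maps from the phase space of the leaves to the phase space of the root. -/
noncomputable def Ctrl (Γ : CGraph C) [Fintype Γ.gr.E] (a : Γ.gr.V) :
    Submodule ℝ (LeafSpace P Γ a → P (Γ.col.vMap a)) :=
  SmoothMaps _ _

/-- The map `ℙ(σ|_{lv}) : ℙ(lv I(b)) → ℙ(lv I(a))` induced by a map of input trees
`σ : I(a) → I(b)`. -/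
noncomputable def leafPull {Γ Γ' : CGraph C} [Fintype Γ.gr.E] [Fintype Γ'.gr.E]
    {a : Γ.gr.V} {b : Γ'.gr.V} (σ : CMap (inTree Γ a) (inTree Γ' b)) :
    LeafSpace P Γ' b →ₗ[ℝ] LeafSpace P Γ a :=
  phasePull P (fun e' : inEdge Γ' b => Γ'.col.vMap (Γ'.gr.s e'.1))
    (fun e : inEdge Γ a => Γ.col.vMap (Γ.gr.s e.1)) σ.toMap.eMap (leafColor σ)

theorem leafPull_contDiff {Γ Γ' : CGraph C} [Fintype Γ.gr.E] [Fintype Γ'.gr.E]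
    {a : Γ.gr.V} {b : Γ'.gr.V} (σ : CMap (inTree Γ a) (inTree Γ' b)) :
    ContDiff ℝ (⊤ : ℕ∞) (leafPull P σ) :=
  phasePull_contDiff P _ _ _ _

/-- The action `Ctrl(σ) X = X ∘ ℙ(σ|_{lv})` of an isomorphism of input trees on
control systems. -/
noncomputable def ctrlMap {Γ Γ' : CGraph C} [Fintype Γ.gr.E] [Fintype Γ'.gr.E]
    {a : Γ.gr.V} {b : Γ'.gr.V}
    (σ : CMap (inTree Γ a) (inTree Γ' b)) (hσ : σ.IsIso) :
    ↥(Ctrl P Γ a) →ₗ[ℝ] ↥(Ctrl P Γ' b) where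
  toFun X :=
    ⟨fun v => pcast P (rootColor σ hσ).symm (X.1 (leafPull P σ v)),
      by
        have hX : ContDiff ℝ (⊤ : ℕ∞) X.1 := X.2
        exact (pcast_contDiff P (rootColor σ hσ).symm).comp
          (hX.comp (leafPull_contDiff P σ))⟩
  map_add' X Y := by
    apply Subtype.ext
    funext v
    simp
  map_smul' r X := by
    apply Subtype.ext
    funext v
    simp

/-- The space of virtual groupoid-invariant vector fields on a finite graph over `C`:
the invariants (limit) of the action of the symmetry groupoid `G(Γ)` on the spaces of
control systems of the input trees. -/
noncomputable def VSpace (Γ : CGraph C) [Fintype Γ.gr.E] :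
    Submodule ℝ (∀ a : Γ.gr.V, ↥(Ctrl P Γ a)) where
  carrier := {X | ∀ (a b : Γ.gr.V) (σ : CMap (inTree Γ a) (inTree Γ b)) (hσ : σ.IsIso),
    ctrlMap P σ hσ (X a) = X b}
  add_mem' := fun hX hY a b σ hσ => by
    simp only [Set.mem_setOf_eq] at *
    simp only [Pi.add_apply, map_add]
    rw [hX a b σ hσ, hY a b σ hσ]
  zero_mem' := fun a b σ hσ => by simp
  smul_mem' := fun r X hX a b σ hσ => by
    simp only [Set.mem_setOf_eq] at *
    simp only [Pi.smul_apply, map_smul]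
    rw [hX a b σ hσ]

/-- The canonical projection `ϖ_a : 𝕍(Γ) → Ctrl(I(a))`. -/
noncomputable def Vproj (Γ : CGraph C) [Fintype Γ.gr.E] (a : Γ.gr.V) :
    ↥(VSpace P Γ) →ₗ[ℝ] ↥(Ctrl P Γ a) :=
  (LinearMap.proj a).comp (VSpace P Γ).subtype

/-- The total phase space `ℙ Γ₀` of a graph over `C`. -/
abbrev TotalPhase (Γ : CGraph C) : Type := ∀ a : Γ.gr.V, P (Γ.col.vMap a)

/-- The map `ℙ(ξ|_{lv I(a)}) : ℙ Γ₀ → ℙ lv I(a)` induced by the canonical map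
`ξ : I(a) → Γ`. -/
noncomputable def leafRestrict (Γ : CGraph C) [Fintype Γ.gr.E] (a : Γ.gr.V) :
    TotalPhase P Γ →ₗ[ℝ] LeafSpace P Γ a :=
  phasePull P Γ.col.vMap (fun e : inEdge Γ a => Γ.col.vMap (Γ.gr.s e.1))
    (fun e : inEdge Γ a => Γ.gr.s e.1) (fun _ => rfl)

/-- The space of (smooth) vector fields on the total phase space of `Γ`. -/
noncomputable def VF (Γ : CGraph C) [Fintype Γ.gr.V] :
    Submodule ℝ (TotalPhase P Γ → TotalPhase P Γ) :=
  SmoothMaps _ _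

/-- The map `S_Γ` sending a virtual groupoid-invariant vector field to an actual
vector field on the phase space `ℙ Γ₀`; its component at a node `a` is
`ϖ_a(v) ∘ ℙ(ξ|_{lv I(a)})`. -/
noncomputable def SMap (Γ : CGraph C) [Fintype Γ.gr.E] [Fintype Γ.gr.V] :
    ↥(VSpace P Γ) →ₗ[ℝ] ↥(VF P Γ) where
  toFun v :=
    ⟨fun x a => (v.1 a).1 (leafRestrict P Γ a x),
      contDiff_pi.2 fun a =>
        ContDiff.comp (show ContDiff ℝ (⊤ : ℕ∞) (v.1 a).1 from (v.1 a).2)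
          (phasePull_contDiff P _ _ _ _)⟩
  map_add' u v := by
    apply Subtype.ext
    funext x a
    simp
  map_smul' r v := by
    apply Subtype.ext
    funext x a
    simp

/-- The subspace of `Ctrl(I(a))` of elements invariant under the automorphism group
`Aut(I(a))` of the colored input tree `I(a)`, acting by `σ · X = X ∘ ℙ(σ|_{lv I(a)})`. -/
noncomputable def AutInv (Γ : CGraph C) [Fintype Γ.gr.E] (a : Γ.gr.V) :
    Submodule ℝ ↥(Ctrl P Γ a) where
  carrier := {X | ∀ (σ : CMap (inTree Γ a) (inTree Γ a)) (hσ : σ.IsIso),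
    ctrlMap P σ hσ X = X}
  add_mem' := fun hX hY σ hσ => by
    simp only [Set.mem_setOf_eq] at *
    rw [map_add, hX σ hσ, hY σ hσ]
  zero_mem' := fun σ hσ => by simp
  smul_mem' := fun r X hX σ hσ => by
    simp only [Set.mem_setOf_eq] at *
    rw [map_smul, hX σ hσ]

/-! Restricting an invariant family to the chosen nodes loses nothing: any other node `b` is
reached by an isomorphism `τ_b : I(a_i) ≅ I(b)` of input trees, which forces
`X_b = Ctrl(τ_b) X_{a_i}`. Conversely, an `Aut(I(a_i))`-invariant `X_{a_i}` extends to an invariant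
family by this formula, since two isomorphisms `I(a_i) ≅ I(b)` differ by an automorphism of
`I(a_i)`, and distinct chosen nodes have non-isomorphic input trees. -/

namespace CMap

variable {Γ₁ Γ₂ Γ₃ : CGraph C}

noncomputable def inv (σ : CMap Γ₁ Γ₂) (hσ : σ.IsIso) : CMap Γ₂ Γ₁ where
  toMap :=
    { vMap := (Equiv.ofBijective _ hσ.1).symm
      eMap := (Equiv.ofBijective _ hσ.2).symm
      hs := fun e => (Equiv.ofBijective _ hσ.1).eq_symm_apply.2 <| by
        rw [Equiv.ofBijective_apply, ← σ.toMap.hs]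
        exact congrArg Γ₂.gr.s ((Equiv.ofBijective _ hσ.2).apply_symm_apply e)
      ht := fun e => (Equiv.ofBijective _ hσ.1).eq_symm_apply.2 <| by
        rw [Equiv.ofBijective_apply, ← σ.toMap.ht]
        exact congrArg Γ₂.gr.t ((Equiv.ofBijective _ hσ.2).apply_symm_apply e) }
  hv v := by
    rw [← σ.hv]
    exact congrArg Γ₂.col.vMap ((Equiv.ofBijective _ hσ.1).apply_symm_apply v)
  he e := by
    rw [← σ.he]
    exact congrArg Γ₂.col.eMap ((Equiv.ofBijective _ hσ.2).apply_symm_apply e)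

theorem isIso_inv (σ : CMap Γ₁ Γ₂) (hσ : σ.IsIso) : (σ.inv hσ).IsIso :=
  ⟨(Equiv.ofBijective _ hσ.1).symm.bijective, (Equiv.ofBijective _ hσ.2).symm.bijective⟩

theorem comp_inv_comp (σ : CMap Γ₂ Γ₃) (hσ : σ.IsIso) (f : CMap Γ₁ Γ₃) :
    σ.comp ((σ.inv hσ).comp f) = f := by
  ext x
  · exact (Equiv.ofBijective _ hσ.1).apply_symm_apply _
  · exact (Equiv.ofBijective _ hσ.2).apply_symm_apply _

end CMap

theorem pcast_trans {c c' c'' : C.V} (h₁ : c = c') (h₂ : c' = c'') (x : P c) :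
    pcast P h₂ (pcast P h₁ x) = pcast P (h₁.trans h₂) x := by
  subst h₁ h₂
  rfl

section CtrlMap

variable {Γ₁ Γ₂ Γ₃ : CGraph C} [Fintype Γ₁.gr.E] [Fintype Γ₂.gr.E] [Fintype Γ₃.gr.E]
  {a₁ : Γ₁.gr.V} {a₂ : Γ₂.gr.V} {a₃ : Γ₃.gr.V}

theorem leafPull_comp (σ : CMap (inTree Γ₁ a₁) (inTree Γ₂ a₂))
    (τ : CMap (inTree Γ₂ a₂) (inTree Γ₃ a₃)) (v : LeafSpace P Γ₃ a₃) :
    leafPull P (τ.comp σ) v = leafPull P σ (leafPull P τ v) :=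
  funext fun _ => (pcast_trans P _ _ _).symm

theorem ctrlMap_id (X : ↥(Ctrl P Γ₁ a₁)) :
    ctrlMap P (CMap.id (inTree Γ₁ a₁)) (CMap.isIso_id _) X = X :=
  rfl

theorem ctrlMap_comp (σ : CMap (inTree Γ₁ a₁) (inTree Γ₂ a₂)) (hσ : σ.IsIso)
    (τ : CMap (inTree Γ₂ a₂) (inTree Γ₃ a₃)) (hτ : τ.IsIso) (X : ↥(Ctrl P Γ₁ a₁)) :
    ctrlMap P τ hτ (ctrlMap P σ hσ X) = ctrlMap P (τ.comp σ) (hτ.comp hσ) X := by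
  ext v
  change pcast P _ (pcast P _ (X.1 (leafPull P σ (leafPull P τ v)))) = _
  rw [pcast_trans, ← leafPull_comp]
  rfl

theorem ctrlMap_congr {σ σ' : CMap (inTree Γ₁ a₁) (inTree Γ₂ a₂)} (h : σ = σ')
    (hσ : σ.IsIso) (hσ' : σ'.IsIso) : ctrlMap P σ hσ = ctrlMap P σ' hσ' := by
  subst h
  rfl

end CtrlMap

theorem ctrlMap_eq_of_mem_autInv {Γ : CGraph C} [Fintype Γ.gr.E] {a b : Γ.gr.V}
    {X : ↥(Ctrl P Γ a)} (hX : X ∈ AutInv P Γ a) (σ σ' : CMap (inTree Γ a) (inTree Γ b))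
    (hσ : σ.IsIso) (hσ' : σ'.IsIso) : ctrlMap P σ hσ X = ctrlMap P σ' hσ' X := by
  have hρ := (σ.isIso_inv hσ).comp hσ'
  calc ctrlMap P σ hσ X
      = ctrlMap P σ hσ (ctrlMap P ((σ.inv hσ).comp σ') hρ X) := by rw [hX]
    _ = ctrlMap P σ' hσ' X := by
      rw [ctrlMap_comp, ctrlMap_congr P (σ.comp_inv_comp hσ σ')]

namespace VSpace

variable {Γ : CGraph C} [Fintype Γ.gr.E] {k : ℕ} (nodes : Fin k → Γ.gr.V)

noncomputable def restrictNodes : ↥(VSpace P Γ) →ₗ[ℝ] ∀ i, ↥(AutInv P Γ (nodes i)) :=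
  LinearMap.pi fun i => (Vproj P Γ (nodes i)).codRestrict _ fun v σ hσ => v.2 _ _ σ hσ

variable {nodes}
  (huniq : ∀ i j : Fin k,
    (∃ σ : CMap (inTree Γ (nodes i)) (inTree Γ (nodes j)), σ.IsIso) → i = j)
include huniq

theorem ctrlMap_eq_of_skeleton (X : ∀ i, ↥(AutInv P Γ (nodes i))) {i j : Fin k} {b : Γ.gr.V}
    (ρ : CMap (inTree Γ (nodes i)) (inTree Γ b)) (hρ : ρ.IsIso)
    (ρ' : CMap (inTree Γ (nodes j)) (inTree Γ b)) (hρ' : ρ'.IsIso) :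
    ctrlMap P ρ hρ (X i) = ctrlMap P ρ' hρ' (X j) := by
  obtain rfl : i = j := huniq i j ⟨_, (ρ'.isIso_inv hρ').comp hρ⟩
  exact ctrlMap_eq_of_mem_autInv P (X i).2 ρ ρ' hρ hρ'

variable (idx : Γ.gr.V → Fin k) (τ : ∀ b, CMap (inTree Γ (nodes (idx b))) (inTree Γ b))
  (hτ : ∀ b, (τ b).IsIso)

noncomputable def extendNodes : (∀ i, ↥(AutInv P Γ (nodes i))) →ₗ[ℝ] ↥(VSpace P Γ) :=
  (LinearMap.pi fun b => (ctrlMap P (τ b) (hτ b)).comp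
      ((AutInv P Γ (nodes (idx b))).subtype.comp (LinearMap.proj (idx b)))).codRestrict _
    fun X a b σ hσ => by
      change ctrlMap P σ hσ (ctrlMap P (τ a) (hτ a) (X (idx a)))
        = ctrlMap P (τ b) (hτ b) (X (idx b))
      rw [ctrlMap_comp]
      exact ctrlMap_eq_of_skeleton P huniq X _ _ _ _

noncomputable def equivPiAutInv : ↥(VSpace P Γ) ≃ₗ[ℝ] ∀ i, ↥(AutInv P Γ (nodes i)) :=
  LinearEquiv.ofLinearMap (restrictNodes P nodes) (extendNodes P huniq idx τ hτ)
    (LinearMap.ext fun X => funext fun _ => Subtype.ext <|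
      (ctrlMap_eq_of_skeleton P huniq X _ (hτ _) (CMap.id _) (CMap.isIso_id _)).trans
        (ctrlMap_id P _))
    (LinearMap.ext fun v => Subtype.ext <| funext fun b => v.2 _ b (τ b) (hτ b))

end VSpace

/-- Let `Γ → C` be a finite colored graph and let
`Aut(I(a₁)) ⊔ … ⊔ Aut(I(a_k))` be a skeleton of the symmetry groupoid `G(Γ)`, i.e. a
choice of nodes `a₁, …, a_k`, one from each isomorphism class of input trees. Then
`𝕍(Γ)` is isomorphic to the product `∏ᵢ Ctrl(I(aᵢ))^{Aut(I(aᵢ))}` of the subspaces of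
invariants. -/
theorem VSpace_iso_product_of_group_invariants {C : DGraph} (P : C.V → Type)
    [∀ c, NormedAddCommGroup (P c)] [∀ c, NormedSpace ℝ (P c)]
    [∀ c, FiniteDimensional ℝ (P c)]
    (Γ : CGraph C) [Fintype Γ.gr.E] (k : ℕ) (nodes : Fin k → Γ.gr.V)
    (hexist : ∀ b : Γ.gr.V, ∃ i : Fin k,
      ∃ σ : CMap (inTree Γ b) (inTree Γ (nodes i)), σ.IsIso)
    (huniq : ∀ i j : Fin k,
      (∃ σ : CMap (inTree Γ (nodes i)) (inTree Γ (nodes j)), σ.IsIso) → i = j) :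
    Nonempty (↥(VSpace P Γ) ≃ₗ[ℝ] ∀ i : Fin k, ↥(AutInv P Γ (nodes i))) := by
  choose idx σ hσ using hexist
  exact ⟨VSpace.equivPiAutInv P huniq idx (fun b => (σ b).inv (hσ b))
    fun b => (σ b).isIso_inv (hσ b)⟩
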